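/- arXiv:1101.3137 — 5 statements merged into one kernel-verified Lean document; each statement's English description precedes it below -/
import Mathlib

section
/- Every element of G₂ has a unique expression of the form w·βⁿ, where n ∈ ℤ and w is an element of the subgroup of G₂ generated by α and γ; moreover the element w of that subgroup and the integer n are uniquely determined. -/
/-!
Using `βⁿα = αβ⁻ⁿ` and `βⁿγβ⁻ⁿ = γ^{±1}`, right multiplication by a generator keeps an element of
the form `w βⁿ` with `w ∈ ⟨α, γ⟩` in that form, which gives existence. For uniqueness, `G₂` acts
on `ℤ` with `α` acting as negation, `β` as translation by `1` and `γ` trivially: then `⟨α, γ⟩`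
fixes `0` while `βⁿ` sends `0` to `n`, so `βⁿ ∈ ⟨α, γ⟩` only for `n = 0`.
-/

/-- The group `G₂ = ⟨α, β, γ ∣ αβα⁻¹ = β⁻¹, βγβ⁻¹ = γ⁻¹⟩`, as the presented
group on three generators with relators `αβα⁻¹β` and `βγβ⁻¹γ`. -/
abbrev G₂ : Type :=
  PresentedGroup ({FreeGroup.of 0 * FreeGroup.of 1 * (FreeGroup.of 0)⁻¹ * FreeGroup.of 1,
    FreeGroup.of 1 * FreeGroup.of 2 * (FreeGroup.of 1)⁻¹ * FreeGroup.of 2} :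
    Set (FreeGroup (Fin 3)))

section NormalForm

variable {G : Type*} [Group G] {a b c : G}

theorem zpow_mul_mul_zpow_eq_self_of_conj_eq_inv (h : a * b * a⁻¹ = b⁻¹) (n : ℤ) :
    b ^ n * a * b ^ n = a := by
  have hconj : a * b ^ (-n) * a⁻¹ = b ^ n := by rw [← conj_zpow, h]; group
  calc b ^ n * a * b ^ n = a * b ^ (-n) * a⁻¹ * a * b ^ n := by rw [hconj]
    _ = a := by group

theorem zpow_mul_mul_zpow_neg_mem_zpowers_of_conj_eq_inv (h : b * c * b⁻¹ = c⁻¹) (n : ℤ) :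
    b ^ n * c * b ^ (-n) ∈ Subgroup.zpowers c := by
  have hstep (k : ℤ) : b ^ (k + 1) * c * b ^ (-(k + 1)) = (b ^ k * c * b ^ (-k))⁻¹ := by
    calc b ^ (k + 1) * c * b ^ (-(k + 1)) = b ^ k * (b * c * b⁻¹) * b ^ (-k) := by group
      _ = (b ^ k * c * b ^ (-k))⁻¹ := by rw [h]; group
  induction n using Int.induction_on with
  | zero => simp only [zpow_zero, neg_zero, one_mul, mul_one]; exact Subgroup.mem_zpowers c
  | succ k ih => rw [hstep]; exact inv_mem ih
  | pred k ih =>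
    have hk := hstep (-(k : ℤ) - 1)
    rw [sub_add_cancel] at hk
    rw [← inv_inv (_ * _ * _), ← hk]
    exact inv_mem ih

theorem exists_mul_zpow_eq_of_mem_closure (hab : a * b * a⁻¹ = b⁻¹) (hbc : b * c * b⁻¹ = c⁻¹)
    {g : G} (hg : g ∈ Subgroup.closure {a, b, c}) :
    ∃ w ∈ Subgroup.closure {a, c}, ∃ n : ℤ, w * b ^ n = g := by
  set H := Subgroup.closure {a, c}
  have ha : a ∈ H := Subgroup.subset_closure (by simp)
  have hc : c ∈ H := Subgroup.subset_closure (by simp)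
  have hcH : Subgroup.zpowers c ≤ H := (Subgroup.zpowers_le).mpr hc
  have hmove {w : G} (hw : w ∈ H) (n m : ℤ) {y : G} (hy : b ^ n * y * b ^ (-m) ∈ H) :
      ∃ w' ∈ H, ∃ n' : ℤ, w' * b ^ n' = w * b ^ n * y :=
    ⟨w * (b ^ n * y * b ^ (-m)), mul_mem hw hy, m, by group⟩
  induction hg using Subgroup.closure_induction_right with
  | one => exact ⟨1, one_mem H, 0, by simp⟩
  | mul_right x _ y hy ih =>
    obtain ⟨w, hw, n, rfl⟩ := ih
    rcases hy with hy | hy | hy <;> subst y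
    · refine hmove hw n (-n) ?_
      rw [neg_neg, zpow_mul_mul_zpow_eq_self_of_conj_eq_inv hab]
      exact ha
    · exact hmove hw n (n + 1) (by group; exact one_mem H)
    · exact hmove hw n n (hcH (zpow_mul_mul_zpow_neg_mem_zpowers_of_conj_eq_inv hbc n))
  | mul_inv_cancel x _ y hy ih =>
    obtain ⟨w, hw, n, rfl⟩ := ih
    rcases hy with hy | hy | hy <;> subst y
    · refine hmove hw n (-n) ?_
      have hinv : b ^ n * a⁻¹ * b ^ (-(-n)) = (b ^ (-n) * a * b ^ (-n))⁻¹ := by group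
      rw [hinv, zpow_mul_mul_zpow_eq_self_of_conj_eq_inv hab]
      exact inv_mem ha
    · exact hmove hw n (n - 1) (by group; exact one_mem H)
    · refine hmove hw n n ?_
      have hinv : b ^ n * c⁻¹ * b ^ (-n) = (b ^ n * c * b ^ (-n))⁻¹ := by group
      rw [hinv]
      exact inv_mem (hcH (zpow_mul_mul_zpow_neg_mem_zpowers_of_conj_eq_inv hbc n))

theorem injective_mul_zpow {H : Subgroup G} (hb : ∀ n : ℤ, b ^ n ∈ H → n = 0) :
    Function.Injective fun wn : H × ℤ ↦ (wn.1 : G) * b ^ wn.2 := by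
  rintro ⟨w, n⟩ ⟨w', n'⟩ (h : (w : G) * b ^ n = w' * b ^ n')
  have hdiff : b ^ (n' - n) = (w' : G)⁻¹ * w := by
    calc b ^ (n' - n) = (w' : G)⁻¹ * (w' * b ^ n') * b ^ (-n) := by group
      _ = (w' : G)⁻¹ * w := by rw [← h]; group
  have hn : n = n' := (sub_eq_zero.mp (hb _ (hdiff ▸ mul_mem (inv_mem w'.2) w.2))).symm
  subst hn
  exact Prod.ext (Subtype.ext (mul_right_cancel h)) rfl

end NormalForm

namespace G₂

noncomputable abbrev α : G₂ := PresentedGroup.of 0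
noncomputable abbrev β : G₂ := PresentedGroup.of 1
noncomputable abbrev γ : G₂ := PresentedGroup.of 2

theorem α_mul_β_mul_α_inv : α * β * α⁻¹ = β⁻¹ :=
  mul_eq_one_iff_eq_inv.mp (PresentedGroup.one_of_mem (Set.mem_insert _ _))

theorem β_mul_γ_mul_β_inv : β * γ * β⁻¹ = γ⁻¹ :=
  mul_eq_one_iff_eq_inv.mp (PresentedGroup.one_of_mem (Set.mem_insert_of_mem _ rfl))

theorem mem_closure_α_β_γ (g : G₂) : g ∈ Subgroup.closure {α, β, γ} :=
  PresentedGroup.generated_by _ _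
    (fun j ↦ by fin_cases j <;> exact Subgroup.subset_closure (by simp)) g

noncomputable def toPermInt : G₂ →* Equiv.Perm ℤ :=
  PresentedGroup.toGroup (f := ![Equiv.neg ℤ, Equiv.addRight 1, 1]) (by
    rintro r (rfl | rfl) <;> ext x <;> simp [Equiv.Perm.mul_apply])

theorem closure_α_γ_le_stabilizer_zero :
    Subgroup.closure {α, γ} ≤ (MulAction.stabilizer (Equiv.Perm ℤ) (0 : ℤ)).comap toPermInt := by
  rw [Subgroup.closure_le, Set.insert_subset_iff, Set.singleton_subset_iff]
  simp [toPermInt]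

theorem eq_zero_of_β_zpow_mem_closure {n : ℤ} (h : β ^ n ∈ Subgroup.closure {α, γ}) : n = 0 := by
  simpa [toPermInt] using closure_α_γ_le_stabilizer_zero h

end G₂

/-- Every element of `G₂` is uniquely of the form `w·βⁿ` with `w` in the
subgroup generated by `α` and `γ` and `n ∈ ℤ`. -/
theorem G₂_normal_form (g : G₂) :
    ∃! wn : (Subgroup.closure ({PresentedGroup.of 0, PresentedGroup.of 2} : Set G₂)) × ℤ,
      g = (wn.1 : G₂) * (PresentedGroup.of 1 : G₂) ^ wn.2 := by
  obtain ⟨w, hw, n, rfl⟩ := exists_mul_zpow_eq_of_mem_closure G₂.α_mul_β_mul_α_inv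
    G₂.β_mul_γ_mul_β_inv (G₂.mem_closure_α_β_γ g)
  exact ⟨(⟨w, hw⟩, n), rfl,
    fun _ h ↦ injective_mul_zpow (fun _ ↦ G₂.eq_zero_of_β_zpow_mem_closure) h.symm⟩
end

section
/- Let b be a fixed-point-free homeomorphism of ℂ that commutes with the translation τ(z) = z + 1. Then for every path γ : [0,1] → ℂ with γ(1) = γ(0) + 1, the angular variation of b along γ is an integer, and this integer is the same for all such paths γ (it is denoted I(b, τ)). -/
/-!
The displacement direction `z ↦ (b z - z) / ‖b z - z‖` is a `1`-periodic map `ℂ → S¹`, and the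
angular variation of `b` along `γ` is the increment of a lift of this map along `γ` through the
covering `θ ↦ e^{2πiθ}`. As `γ 1 = γ 0 + 1`, both ends of `γ` have the same direction, so the
increment is an integer. Two such paths are joined by the straight-line homotopy, all of whose
paths again satisfy `γ 1 = γ 0 + 1`; lifting the homotopy makes the increment an integer depending
continuously on the homotopy parameter, hence constant.
-/

open Real FourierTransform unitInterval

theorem Real.fourierChar_eq_fourierChar_iff {x y : ℝ} : 𝐞 x = 𝐞 y ↔ ∃ n : ℤ, x = y + n := by
  simp only [fourierChar_apply', Circle.exp_eq_exp]
  refine exists_congr fun n ↦ ⟨fun h ↦ ?_, fun h ↦ by rw [h]; ring⟩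
  exact mul_left_cancel₀ two_pi_pos.ne' (by linarith)

theorem Real.isCoveringMap_fourierChar : IsCoveringMap (𝐞 : ℝ → Circle) :=
  Circle.isCoveringMap_exp.comp_homeomorph (Homeomorph.mulLeft₀ (2 * π) two_pi_pos.ne')

theorem Real.fourierChar_eq_div_norm_of_eq_norm_mul_exp {v : ℂ} (hv : v ≠ 0) {θ : ℝ}
    (h : v = ‖v‖ * Complex.exp (2 * π * Complex.I * θ)) : (𝐞 θ : ℂ) = v / ‖v‖ := by
  rw [eq_div_iff (by simpa using hv), fourierChar_apply, mul_comm]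
  convert h.symm using 3
  push_cast
  ring

theorem exists_int_sub_eq_of_fourierChar_eq {X : Type*} [TopologicalSpace X] [PreconnectedSpace X]
    {f g : X → ℝ} (hf : Continuous f) (hg : Continuous g) (h : ∀ x, 𝐞 (f x) = 𝐞 (g x)) :
    ∃ n : ℤ, ∀ x, f x - g x = n := by
  rcases isEmpty_or_nonempty X with _ | ⟨⟨x₀⟩⟩
  · exact ⟨0, isEmptyElim⟩
  obtain ⟨n, hn⟩ := fourierChar_eq_fourierChar_iff.1 (h x₀)
  refine ⟨n, fun x ↦ ?_⟩
  have hconst := isCoveringMap_fourierChar.const_of_comp (hf.sub hg)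
    (fun x x' ↦ by simp only [Pi.sub_apply, AddChar.map_sub_eq_div, h, div_self']) x x₀
  simp only [Pi.sub_apply] at hconst
  rw [hconst, hn]
  ring

namespace ContinuousMap

variable {X : Type*} [TopologicalSpace X]

noncomputable def direction (f : C(X, ℂ)) (hf : ∀ x, f x ≠ 0) : C(X, Circle) where
  toFun x := ⟨f x / ‖f x‖, by simp [Submonoid.unitSphere, hf x]⟩
  continuous_toFun := (f.continuous.div (by fun_prop) fun x ↦ by simpa using hf x).subtype_mk
    fun x ↦ by simp [Submonoid.unitSphere, hf x]

@[simp]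
theorem coe_direction_apply (f : C(X, ℂ)) (hf : ∀ x, f x ≠ 0) (x : X) :
    (f.direction hf x : ℂ) = f x / ‖f x‖ :=
  rfl

end ContinuousMap

section PeriodicDirectionField

variable {u : C(ℂ, Circle)} (hu : ∀ z, u (z + 1) = u z)
include hu

theorem exists_int_lift_one_sub_lift_zero {γ : C(I, ℂ)} (hγ : γ 1 = γ 0 + 1) {θ : C(I, ℝ)}
    (hθ : ∀ t, 𝐞 (θ t) = u (γ t)) : ∃ n : ℤ, θ 1 - θ 0 = n := by
  obtain ⟨n, hn⟩ := fourierChar_eq_fourierChar_iff.1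
    (show 𝐞 (θ 1) = 𝐞 (θ 0) by rw [hθ, hθ, hγ, hu])
  exact ⟨n, by rw [hn]; ring⟩

theorem lift_one_sub_lift_zero_eq_of_periodic {γ₀ γ₁ : C(I, ℂ)} (h₀ : γ₀ 1 = γ₀ 0 + 1)
    (h₁ : γ₁ 1 = γ₁ 0 + 1) {θ₀ θ₁ : C(I, ℝ)} (hθ₀ : ∀ t, 𝐞 (θ₀ t) = u (γ₀ t))
    (hθ₁ : ∀ t, 𝐞 (θ₁ t) = u (γ₁ t)) :
    θ₁ 1 - θ₁ 0 = θ₀ 1 - θ₀ 0 := by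
  let F := ContinuousMap.Homotopy.affine γ₀ γ₁
  have hF (s : I) : F (s, 1) = F (s, 0) + 1 := by
    simp only [F, ContinuousMap.Homotopy.affine_apply, h₀, h₁, AffineMap.lineMap_apply,
      vsub_eq_sub, add_sub_add_right_eq_sub, Complex.real_smul, vadd_eq_add]
    ring
  let Θ := isCoveringMap_fourierChar.liftHomotopy (u.comp F.toContinuousMap) θ₀
    (fun t ↦ by simp [hθ₀])
  have hΘ (p : I × I) : 𝐞 (Θ p) = u (F p) :=
    congr_fun (isCoveringMap_fourierChar.liftHomotopy_lifts ..) p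
  have hΘ₀ (t : I) : Θ (0, t) = θ₀ t := isCoveringMap_fourierChar.liftHomotopy_zero ..
  obtain ⟨n, hn⟩ := exists_int_sub_eq_of_fourierChar_eq (f := fun s ↦ Θ (s, 1))
    (g := fun s ↦ Θ (s, 0)) (by fun_prop) (by fun_prop) fun s ↦ by rw [hΘ, hΘ, hF, hu]
  obtain ⟨m, hm⟩ := exists_int_sub_eq_of_fourierChar_eq (g := fun t ↦ Θ (1, t))
    θ₁.continuous (by fun_prop) fun t ↦ by rw [hθ₁, hΘ]; simp [F]
  linarith [hn 0, hn 1, hm 0, hm 1, hΘ₀ 0, hΘ₀ 1]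

theorem exists_int_forall_lift_one_sub_lift_zero_eq :
    ∃ n : ℤ, ∀ γ : C(I, ℂ), γ 1 = γ 0 + 1 → ∀ θ : C(I, ℝ), (∀ t, 𝐞 (θ t) = u (γ t)) →
      θ 1 - θ 0 = n := by
  by_cases h : ∃ γ : C(I, ℂ), γ 1 = γ 0 + 1 ∧ ∃ θ : C(I, ℝ), ∀ t, 𝐞 (θ t) = u (γ t)
  · obtain ⟨γ₀, hγ₀, θ₀, hθ₀⟩ := h
    obtain ⟨n, hn⟩ := exists_int_lift_one_sub_lift_zero hu hγ₀ hθ₀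
    exact ⟨n, fun γ hγ θ hθ ↦ (lift_one_sub_lift_zero_eq_of_periodic hu hγ₀ hγ hθ₀ hθ).trans hn⟩
  · exact ⟨0, fun γ hγ θ hθ ↦ absurd ⟨γ, hγ, θ, hθ⟩ h⟩

end PeriodicDirectionField

/-- Let `b` be a fixed-point-free homeomorphism of `ℂ` commuting with the
translation `τ(z) = z + 1`. Then there is a single integer `n` (the index
`I(b, τ)`) such that for every path `γ : [0,1] → ℂ` with `γ(1) = γ(0) + 1`,
the angular variation of `b` along `γ` — i.e. `θ(1) - θ(0)` for any continuous
lift `θ` with `b(γ(t)) - γ(t) = |b(γ(t)) - γ(t)|·e^{2πiθ(t)}` — equals `n`. -/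
theorem index_of_commuting_homeo_is_integer
    (b : ℂ ≃ₜ ℂ) (hb_free : ∀ z, b z ≠ z) (hcomm : ∀ z, b (z + 1) = b z + 1) :
    ∃ n : ℤ, ∀ γ : ℝ → ℂ, ContinuousOn γ (Set.Icc 0 1) → γ 1 = γ 0 + 1 →
      ∀ θ : ℝ → ℝ, ContinuousOn θ (Set.Icc 0 1) →
        (∀ t ∈ Set.Icc (0 : ℝ) 1,
          b (γ t) - γ t = (‖b (γ t) - γ t‖ : ℂ) *
            Complex.exp (2 * Real.pi * Complex.I * (θ t : ℂ))) →
        θ 1 - θ 0 = (n : ℝ) := by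
  let w : C(ℂ, ℂ) := ⟨fun z ↦ b z - z, by fun_prop⟩
  have hw (z : ℂ) : w z ≠ 0 := sub_ne_zero.2 (hb_free z)
  have hu (z : ℂ) : w.direction hw (z + 1) = w.direction hw z := by
    ext
    simp [w, hcomm]
  obtain ⟨n, hn⟩ := exists_int_forall_lift_one_sub_lift_zero_eq hu
  refine ⟨n, fun γ hγ hγ1 θ hθ hlift ↦ ?_⟩
  exact hn ⟨_, hγ.domRestrict⟩ hγ1 ⟨_, hθ.domRestrict⟩ fun t ↦
    Circle.ext (fourierChar_eq_div_norm_of_eq_norm_mul_exp (hw _) (hlift t t.2))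
end

section
/- Let b be a fixed-point-free homeomorphism of ℂ satisfying τ ∘ b ∘ τ⁻¹ = b⁻¹, where τ(z) = z + 1. Then for every path γ : [0,1] → ℂ with γ(1) = b(γ(0)) + 1 (i.e. joining a point to its image under τ ∘ b), the angular variation of b along γ lies in ℤ + 1/2, and this half-integer is the same for all such paths γ (it is denoted I(b, τ)). -/
/-!
Since `ℂ` is simply connected, the nowhere-vanishing displacement `v z = b z - z` has a
continuous logarithm `L`, so the angular variation along a path `γ` is
`(Im L (γ 1) - Im L (γ 0)) / 2π`. For `F = τ ∘ b` the relation `τ b τ⁻¹ = b⁻¹` gives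
`v ∘ F = -v`, hence `(Im L (F z) - Im L z) / 2π` is a continuous function of `z` with values
in `ℤ + 1/2`, and therefore constant on the connected plane.
-/

open Complex Set Real

theorem IsPreconnected.eq_of_mapsTo_range_intCast {α : Type*} [TopologicalSpace α] {s : Set α}
    (hs : IsPreconnected s) {f : α → ℝ} (hf : ContinuousOn f s)
    (hint : MapsTo f s (range ((↑) : ℤ → ℝ))) {x y : α} (hx : x ∈ s) (hy : y ∈ s) :
    f x = f y :=
  hs.constant_of_mapsTo Int.isClosedEmbedding_coe_real.isInducing.isDiscrete_range hf hint hx hy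

theorem Complex.im_sub_im_div_two_pi_mem_range_intCast {z w : ℂ} (h : exp z = exp w) :
    (z.im - w.im) / (2 * π) ∈ range ((↑) : ℤ → ℝ) := by
  obtain ⟨k, hk⟩ := exp_eq_exp_iff_exists_int.mp h
  refine ⟨k, ?_⟩
  have him : z.im = w.im + 2 * π * k := by simpa [mul_comm, mul_left_comm] using congrArg im hk
  field_simp
  linarith

theorem Complex.im_sub_div_two_pi_mem_range_intCast_of_exp_eq {z : ℂ} {θ : ℝ}
    (h : exp z = ‖exp z‖ * exp (2 * π * I * θ)) :
    (z.im - 2 * π * θ) / (2 * π) ∈ range ((↑) : ℤ → ℝ) := by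
  have hz : exp z = exp (z.re + 2 * π * I * θ) := by
    rwa [Complex.exp_add, ← ofReal_exp, ← Complex.norm_exp]
  simpa using im_sub_im_div_two_pi_mem_range_intCast hz

section AngularVariation

variable {X : Type*} [TopologicalSpace X] {v : X → ℂ}

def IsAngleLift (v : X → ℂ) (γ : ℝ → X) (θ : ℝ → ℝ) : Prop :=
  ∀ t ∈ Icc (0 : ℝ) 1, v (γ t) = (‖v (γ t)‖ : ℂ) * exp (2 * π * I * (θ t : ℂ))

theorem exists_continuous_exp_eq [SimplyConnectedSpace X] [LocallyPathConnectedSpace X]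
    (hv : Continuous v) (hv0 : ∀ x, v x ≠ 0) :
    ∃ L : X → ℂ, Continuous L ∧ ∀ x, exp (L x) = v x := by
  obtain ⟨x₀⟩ : Nonempty X := inferInstance
  obtain ⟨L, -, hL⟩ := (isCoveringMapOn_exp.existsUnique_continuousMap_lifts ⟨v, hv⟩
    (exp_log (hv0 x₀)) hv0).exists
  exact ⟨L, L.continuous, congrFun hL⟩

theorem IsAngleLift.sub_eq {L : X → ℂ} (hL : Continuous L) (hLv : ∀ x, exp (L x) = v x)
    {γ : ℝ → X} {θ : ℝ → ℝ} (hγ : ContinuousOn γ (Icc 0 1)) (hθ : ContinuousOn θ (Icc 0 1))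
    (h : IsAngleLift v γ θ) :
    θ 1 - θ 0 = ((L (γ 1)).im - (L (γ 0)).im) / (2 * π) := by
  set d : ℝ → ℝ := fun t => ((L (γ t)).im - 2 * π * θ t) / (2 * π)
  have hd_int : MapsTo d (Icc 0 1) (range ((↑) : ℤ → ℝ)) := fun t ht =>
    im_sub_div_two_pi_mem_range_intCast_of_exp_eq (by rw [hLv]; exact h t ht)
  have hd_cont : ContinuousOn d (Icc 0 1) := by fun_prop
  have hd := isPreconnected_Icc.eq_of_mapsTo_range_intCast hd_cont hd_int
    (left_mem_Icc.2 zero_le_one) (right_mem_Icc.2 zero_le_one)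
  simp only [d] at hd
  field_simp at hd ⊢
  linarith

theorem exists_angle_variation_eq_int_add_half [SimplyConnectedSpace X]
    [LocallyPathConnectedSpace X] {F : X → X} (hv : Continuous v) (hv0 : ∀ x, v x ≠ 0)
    (hF : Continuous F) (hvF : ∀ x, v (F x) = -v x) :
    ∃ n : ℤ, ∀ γ : ℝ → X, ContinuousOn γ (Icc 0 1) → γ 1 = F (γ 0) →
      ∀ θ : ℝ → ℝ, ContinuousOn θ (Icc 0 1) → IsAngleLift v γ θ → θ 1 - θ 0 = n + 1 / 2 := by
  obtain ⟨L, hL, hLv⟩ := exists_continuous_exp_eq hv hv0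
  set φ : X → ℝ := fun x => ((L (F x)).im - (L x + π * I).im) / (2 * π)
  have hφ_int : MapsTo φ univ (range ((↑) : ℤ → ℝ)) := fun x _ =>
    im_sub_im_div_two_pi_mem_range_intCast <| by
      rw [Complex.exp_add, exp_pi_mul_I, hLv, hLv, hvF, mul_neg_one]
  have hφ_cont : Continuous φ := by fun_prop
  obtain ⟨x₀⟩ : Nonempty X := inferInstance
  obtain ⟨n, hn⟩ := hφ_int (mem_univ x₀)
  refine ⟨n, fun γ hγ hγF θ hθ hlift => ?_⟩
  have hφγ := isPreconnected_univ.eq_of_mapsTo_range_intCast hφ_cont.continuousOn hφ_int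
    (mem_univ (γ 0)) (mem_univ x₀)
  rw [hlift.sub_eq hL hLv hγ hθ, hγF, hn, ← hφγ]
  simp only [φ, add_im, mul_im, ofReal_re, ofReal_im, I_re, I_im]
  field_simp
  ring

end AngularVariation

/-- Let `b` be a fixed-point-free homeomorphism of `ℂ` with `τ ∘ b ∘ τ⁻¹ = b⁻¹`
where `τ(z) = z + 1`. Then there is a single half-integer `n + 1/2` (the index
`I(b, τ)`) such that for every path `γ : [0,1] → ℂ` with `γ(1) = b(γ(0)) + 1`,
the angular variation of `b` along `γ` — i.e. `θ(1) - θ(0)` for any continuous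
lift `θ` with `b(γ(t)) - γ(t) = |b(γ(t)) - γ(t)|·e^{2πiθ(t)}` — equals
`n + 1/2`. -/
theorem index_of_anticommuting_homeo_is_half_integer
    (b : ℂ ≃ₜ ℂ) (hb_free : ∀ z, b z ≠ z)
    (hanti : ∀ z, b (z - 1) + 1 = b.symm z) :
    ∃ n : ℤ, ∀ γ : ℝ → ℂ, ContinuousOn γ (Set.Icc 0 1) → γ 1 = b (γ 0) + 1 →
      ∀ θ : ℝ → ℝ, ContinuousOn θ (Set.Icc 0 1) →
        (∀ t ∈ Set.Icc (0 : ℝ) 1,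
          b (γ t) - γ t = (‖b (γ t) - γ t‖ : ℂ) *
            Complex.exp (2 * Real.pi * Complex.I * (θ t : ℂ))) →
        θ 1 - θ 0 = (n : ℝ) + 1 / 2 := by
  have hbF : ∀ z, b (b z + 1) = z + 1 := fun z => by
    simpa using congrArg b (hanti (z + 1))
  refine exists_angle_variation_eq_int_add_half (v := fun z => b z - z) (F := fun z => b z + 1)
    (by fun_prop) (fun z => sub_ne_zero.mpr (hb_free z)) (by fun_prop) fun z => ?_
  simp only [hbF]
  ring
end

section
/- Let a and b be order-preserving homeomorphisms of the real line (strictly increasing continuous bijections ℝ → ℝ) satisfying a ∘ b ∘ a⁻¹ = b⁻¹. Then b has at least one fixed point, and every fixed point of a is a fixed point of b. -/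
/-- Let `a` and `b` be order-preserving homeomorphisms of the line (strictly
increasing continuous bijections `ℝ → ℝ`) with `a ∘ b ∘ a⁻¹ = b⁻¹` (i.e.
`a ∘ b = b⁻¹ ∘ a`). Then `b` has a fixed point, and every fixed point of `a`
is a fixed point of `b`. -/
theorem line_actions_fixed_points
    (a b : ℝ → ℝ)
    (ha_cont : Continuous a) (ha_mono : StrictMono a) (ha_bij : Function.Bijective a)
    (hb_cont : Continuous b) (hb_mono : StrictMono b) (hb_bij : Function.Bijective b)
    (hrel : ∀ x : ℝ, a (b x) = Function.invFun b (a x)) :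
    (∃ x, b x = x) ∧ ∀ x, a x = x → b x = x := by
  have hbinv : ∀ y, b (Function.invFun b y) = y :=
    Function.rightInverse_invFun hb_bij.2
  -- invFun b compares to identity opposite to b
  have hinv_lt : ∀ y, (∀ t, t < b t) → Function.invFun b y < y := by
    intro y h
    have := h (Function.invFun b y)
    rwa [hbinv y] at this
  have hinv_gt : ∀ y, (∀ t, b t < t) → y < Function.invFun b y := by
    intro y h
    have := h (Function.invFun b y)
    rwa [hbinv y] at this
  constructor
  · by_contra h
    push_neg at h
    have hg : Continuous (fun t => b t - t) := hb_cont.sub continuous_id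
    -- constant sign
    have hsign : (∀ t, t < b t) ∨ (∀ t, b t < t) := by
      rcases lt_or_gt_of_ne (h 0) with h0 | h0
      · right
        intro t
        by_contra ht
        push_neg at ht
        have ht' : t < b t := lt_of_le_of_ne ht (fun e => h t e.symm)
        have hsub : (0:ℝ) ∈ Set.uIcc (b t - t) (b 0 - 0) :=
          Set.mem_uIcc.2 (Or.inr ⟨by linarith, by linarith⟩)
        obtain ⟨c, _, hc⟩ := intermediate_value_uIcc (hg.continuousOn) hsub
        exact h c (by dsimp at hc; linarith)
      · left
        intro t
        by_contra ht
        push_neg at ht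
        have ht' : b t < t := lt_of_le_of_ne ht (h t)
        have hsub : (0:ℝ) ∈ Set.uIcc (b t - t) (b 0 - 0) :=
          Set.mem_uIcc.2 (Or.inl ⟨by linarith, by linarith⟩)
        obtain ⟨c, _, hc⟩ := intermediate_value_uIcc (hg.continuousOn) hsub
        exact h c (by dsimp at hc; linarith)
    rcases hsign with hpos | hneg
    · have h1 : a 0 < a (b 0) := ha_mono (hpos 0)
      have h2 : Function.invFun b (a 0) < a 0 := hinv_lt _ hpos
      rw [hrel 0] at h1
      linarith
    · have h1 : a (b 0) < a 0 := ha_mono (hneg 0)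
      have h2 : a 0 < Function.invFun b (a 0) := hinv_gt _ hneg
      rw [hrel 0] at h1
      linarith
  · intro x hax
    have hr := hrel x
    rw [hax] at hr
    rcases lt_trichotomy (b x) x with hlt | heq | hgt
    · -- b x < x ⇒ a (b x) < x, but invFun b x > x
      have h1 : a (b x) < a x := ha_mono hlt
      rw [hax] at h1
      have h2 : x < Function.invFun b x := by
        by_contra hc
        push_neg at hc
        have := hb_mono.monotone hc
        rw [hbinv x] at this
        linarith [hb_mono hlt, this]
      linarith [hr ▸ h1, h2]
    · exact heq
    · have h1 : a x < a (b x) := ha_mono hgt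
      rw [hax] at h1
      have h2 : Function.invFun b x < x := by
        by_contra hc
        push_neg at hc
        have := hb_mono.monotone hc
        rw [hbinv x] at this
        linarith
      linarith [hr ▸ h1]
end

section
/- (Birkhoff's lemma) Let b be a homeomorphism of the plane ℝ² and let x be an isolated fixed point of b. Then at least one of the following holds: (1) x has a basis of neighbourhoods consisting of connected closed sets N satisfying b(N) ⊆ N; or (2) for every sufficiently small closed neighbourhood N of x, there exists a compact connected set k′ ⊆ N containing x and containing a point of the boundary ∂N, and satisfying b⁻¹(k′) ⊆ k′. -/
/-!
Let `N` be a compact neighbourhood of `x`, `Kₙ = N ∩ b(N) ∩ ⋯ ∩ bⁿ(N)` and `Cₙ` the component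
of `x` in `Kₙ`. If some `Cₙ` misses `∂N`, boundary bumping applied to the continuum `b(Cₙ)` forces
`b(Cₙ) ⊆ N`, hence `b(Cₙ) ⊆ Cₙ`; and `Cₙ` is a neighbourhood of `x` because `Kₙ` is one and the
plane is locally connected. Otherwise the decreasing continua `Cₙ` all reach `∂N`, and since
`b⁻¹(Cₙ₊₁) ⊆ Cₙ` their intersection is a continuum `k'` through `x` meeting `∂N` with
`b⁻¹(k') ⊆ k'`. So once (1) fails at some scale `U`, every closed neighbourhood inside `U` and
inside a fixed compact neighbourhood is in the second case.
-/

open Set Filter Topology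

section Continua

variable {X : Type*} [TopologicalSpace X]

theorem IsCompact.connectedComponentIn {F : Set X} (hF : IsCompact F) (x : X) :
    IsCompact (connectedComponentIn F x) := by
  by_cases hx : x ∈ F
  · have : CompactSpace F := isCompact_iff_compactSpace.mp hF
    rw [connectedComponentIn_eq_image hx]
    exact isClosed_connectedComponent.isCompact.image continuous_subtype_val
  · rw [connectedComponentIn_eq_empty hx]
    exact isCompact_empty

theorem IsPreconnected.iInter_of_directed [T2Space X] {ι : Type*} [Nonempty ι] {C : ι → Set X}
    (hdir : Directed (· ⊇ ·) C) (hc : ∀ i, IsCompact (C i)) (hC : ∀ i, IsPreconnected (C i)) :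
    IsPreconnected (⋂ i, C i) := by
  have hD : IsCompact (⋂ i, C i) := (hc (Classical.arbitrary ι)).of_isClosed_subset
    (isClosed_iInter fun i => (hc i).isClosed) (iInter_subset _ _)
  refine isPreconnected_closed_iff.mpr fun t t' ht ht' hcover hDt hDt' => ?_
  by_contra hempty
  obtain ⟨U, V, hU, hV, htU, ht'V, hUV⟩ : SeparatedNhds ((⋂ i, C i) ∩ t) ((⋂ i, C i) ∩ t') :=
    .of_isCompact_isCompact (hD.inter_right ht) (hD.inter_right ht') <|
      disjoint_left.mpr fun z hz hz' => hempty ⟨z, hz.1, hz.2, hz'.2⟩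
  obtain ⟨i, hi⟩ : ∃ i, C i ⊆ U ∪ V := exists_subset_nhds_of_isCompact hdir hc fun z hz =>
    (hU.union hV).mem_nhds <| (hcover hz).imp (fun h => htU ⟨hz, h⟩) (fun h => ht'V ⟨hz, h⟩)
  obtain ⟨a, haD, hat⟩ := hDt
  obtain ⟨a', ha'D, ha't'⟩ := hDt'
  obtain ⟨z, -, hzU, hzV⟩ := hC i U V hU hV hi ⟨a, mem_iInter.mp haD i, htU ⟨haD, hat⟩⟩
    ⟨a', mem_iInter.mp ha'D i, ht'V ⟨ha'D, ha't'⟩⟩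
  exact hUV.ne_of_mem hzU hzV rfl

theorem exists_isClopen_mem_disjoint_of_disjoint_connectedComponent [T2Space X] [CompactSpace X]
    {x : X} {F : Set X} (hF : IsClosed F) (h : Disjoint (connectedComponent x) F) :
    ∃ s, IsClopen s ∧ x ∈ s ∧ Disjoint s F := by
  rw [connectedComponent_eq_iInter_isClopen, disjoint_iff_inter_eq_empty, inter_comm] at h
  obtain ⟨u, hu⟩ := hF.isCompact.elim_finite_subfamily_closed _ (fun s => s.2.1.1) h
  refine ⟨⋂ s ∈ u, s.1, isClopen_biInter_finset fun s _ => s.2.1, mem_iInter₂.mpr fun s _ => s.2.2,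
    ?_⟩
  rwa [disjoint_iff_inter_eq_empty, inter_comm]

/-- Boundary bumping theorem. -/
theorem connectedComponentIn_inter_frontier_nonempty_of_not_subset [T2Space X] {T N : Set X}
    (hTc : IsCompact T) (hT : IsPreconnected T) (hN : IsClosed N) {x : X} (hxT : x ∈ T)
    (hxN : x ∈ N) (hTN : ¬T ⊆ N) : (connectedComponentIn (T ∩ N) x ∩ frontier N).Nonempty := by
  by_contra hmiss
  have hxA : x ∈ T ∩ N := ⟨hxT, hxN⟩
  have : CompactSpace ↥(T ∩ N) := isCompact_iff_compactSpace.mp (hTc.inter_right hN)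
  obtain ⟨s, hs, hxs, hsF⟩ := exists_isClopen_mem_disjoint_of_disjoint_connectedComponent
    (x := ⟨x, hxA⟩) (F := Subtype.val ⁻¹' frontier N)
    (isClosed_frontier.preimage continuous_subtype_val) <| by
      rw [disjoint_left]
      rintro z hz hzF
      refine hmiss ⟨z, ?_, hzF⟩
      rw [connectedComponentIn_eq_image hxA]
      exact mem_image_of_mem _ hz
  set L : Set X := Subtype.val '' s
  have hLN : L ⊆ interior N := by
    rintro _ ⟨z, hzs, rfl⟩
    by_contra hz
    exact disjoint_left.mp hsF hzs (by rw [hN.frontier_eq]; exact ⟨z.2.2, hz⟩)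
  have hL : IsClosed L := (hs.isClosed.isCompact.image continuous_subtype_val).isClosed
  obtain ⟨W, hW, hWs⟩ := isOpen_induced_iff.mp hs.isOpen
  have hTWL : T ∩ (W ∩ interior N) ⊆ L := fun z ⟨hzT, hzW, hzN⟩ =>
    ⟨⟨z, hzT, interior_subset hzN⟩, hWs ▸ hzW, rfl⟩
  have hcover : T ⊆ (W ∩ interior N) ∪ Lᶜ := by
    intro z _
    by_cases hzL : z ∈ L
    · obtain ⟨z', hz's, rfl⟩ := hzL
      exact Or.inl ⟨(hWs.symm ▸ hz's : z' ∈ Subtype.val ⁻¹' W), hLN ⟨z', hz's, rfl⟩⟩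
    · exact Or.inr hzL
  have hTL : T ⊆ L := by
    rcases isPreconnected_iff_subset_of_disjoint.mp hT _ _ (hW.inter isOpen_interior)
      hL.isOpen_compl hcover (eq_empty_iff_forall_notMem.mpr fun z ⟨hzT, hzWN, hzL⟩ =>
        hzL (hTWL ⟨hzT, hzWN⟩)) with hsub | hsub
    · exact fun z hz => hTWL ⟨hz, hsub hz⟩
    · exact absurd ⟨⟨x, hxA⟩, hxs, rfl⟩ (hsub hxT)
  exact hTN fun z hz => interior_subset (hLN (hTL hz))

end Continua

section iterImageInter

variable {X : Type*}

def iterImageInter (f : X → X) (s : Set X) : ℕ → Set X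
  | 0 => s
  | n + 1 => s ∩ f '' iterImageInter f s n

variable {f : X → X} {s : Set X}

theorem iterImageInter_subset (n : ℕ) : iterImageInter f s n ⊆ s := by
  cases n
  · exact Subset.rfl
  · exact inter_subset_left

theorem antitone_iterImageInter : Antitone (iterImageInter f s) := by
  refine antitone_nat_of_succ_le fun n => ?_
  induction n with
  | zero => exact inter_subset_left
  | succ n ih => exact inter_subset_inter_right _ (image_mono ih)

theorem mem_iterImageInter {x : X} (hx : f x = x) (hs : x ∈ s) (n : ℕ) :
    x ∈ iterImageInter f s n := by
  induction n with
  | zero => exact hs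
  | succ n ih => exact ⟨hs, x, ih, hx⟩

variable [TopologicalSpace X]

theorem iterImageInter_mem_nhds {x : X} (hf : IsOpenMap f) (hx : f x = x) (hs : s ∈ 𝓝 x)
    (n : ℕ) : iterImageInter f s n ∈ 𝓝 x := by
  induction n with
  | zero => exact hs
  | succ n ih => exact inter_mem hs (hx ▸ hf.image_mem_nhds ih)

theorem isCompact_iterImageInter [T2Space X] (hf : Continuous f) (hs : IsCompact s) (n : ℕ) :
    IsCompact (iterImageInter f s n) := by
  induction n with
  | zero => exact hs
  | succ n ih => exact hs.inter (ih.image hf)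

end iterImageInter

section Birkhoff

variable {X : Type*} [TopologicalSpace X] (b : X ≃ₜ X) {x : X} {N : Set X}

theorem image_symm_connectedComponentIn_iterImageInter_succ (hx : b x = x) (hxN : x ∈ N)
    (n : ℕ) : b.symm '' connectedComponentIn (iterImageInter b N (n + 1)) x ⊆
      connectedComponentIn (iterImageInter b N n) x := by
  refine (isPreconnected_connectedComponentIn.image _ b.symm.continuous.continuousOn)
    |>.subset_connectedComponentIn ?_ ?_
  · exact ⟨x, mem_connectedComponentIn (mem_iterImageInter hx hxN _), b.symm_apply_eq.2 hx.symm⟩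
  · calc b.symm '' connectedComponentIn (iterImageInter b N (n + 1)) x
        ⊆ b.symm '' (b '' iterImageInter b N n) :=
          image_mono ((connectedComponentIn_subset _ _).trans inter_subset_right)
      _ = iterImageInter b N n := b.symm_image_image _

theorem exists_continuum_of_forall_connectedComponentIn_meets_frontier [T2Space X]
    (hx : b x = x) (hNc : IsCompact N) (hxN : x ∈ N)
    (h : ∀ n, (connectedComponentIn (iterImageInter b N n) x ∩ frontier N).Nonempty) :
    ∃ k, IsCompact k ∧ IsConnected k ∧ k ⊆ N ∧ x ∈ k ∧ (k ∩ frontier N).Nonempty ∧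
      b.symm '' k ⊆ k := by
  set C := fun n => connectedComponentIn (iterImageInter b N n) x
  have hC : Antitone C := fun m n hmn => connectedComponentIn_mono x (antitone_iterImageInter hmn)
  have hCc : ∀ n, IsCompact (C n) := fun n =>
    (isCompact_iterImageInter b.continuous hNc n).connectedComponentIn x
  have hxC : ∀ n, x ∈ C n := fun n => mem_connectedComponentIn (mem_iterImageInter hx hxN n)
  refine ⟨⋂ n, C n, ?_, ⟨⟨x, mem_iInter.2 hxC⟩, ?_⟩,
    (iInter_subset _ 0).trans (connectedComponentIn_subset _ _), mem_iInter.2 hxC, ?_, ?_⟩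
  · exact (hCc 0).of_isClosed_subset (isClosed_iInter fun n => (hCc n).isClosed)
      (iInter_subset _ 0)
  · exact .iInter_of_directed hC.directed_ge hCc fun n => isPreconnected_connectedComponentIn
  · have hCF : Antitone fun n => C n ∩ frontier N := fun m n hmn =>
      inter_subset_inter_left _ (hC hmn)
    obtain ⟨z, hz⟩ := IsCompact.nonempty_iInter_of_directed_nonempty_isCompact_isClosed _
      hCF.directed_ge h (fun n => (hCc n).inter_right isClosed_frontier)
      (fun n => ((hCc n).inter_right isClosed_frontier).isClosed)
    exact ⟨z, mem_iInter.2 fun n => (mem_iInter.1 hz n).1, (mem_iInter.1 hz 0).2⟩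
  · rintro _ ⟨z, hz, rfl⟩
    exact mem_iInter.2 fun n => image_symm_connectedComponentIn_iterImageInter_succ b hx hxN n
      ⟨z, mem_iInter.1 hz (n + 1), rfl⟩

theorem image_connectedComponentIn_iterImageInter_subset [T2Space X] (hx : b x = x)
    (hNc : IsCompact N) (hxN : x ∈ N) {n : ℕ}
    (h : connectedComponentIn (iterImageInter b N n) x ∩ frontier N = ∅) :
    b '' connectedComponentIn (iterImageInter b N n) x ⊆
      connectedComponentIn (iterImageInter b N n) x := by
  set C := fun n => connectedComponentIn (iterImageInter b N n) x
  have hbC : IsPreconnected (b '' C n) :=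
    isPreconnected_connectedComponentIn.image _ b.continuous.continuousOn
  have hxbC : x ∈ b '' C n := ⟨x, mem_connectedComponentIn (mem_iterImageInter hx hxN n), hx⟩
  have hbCK : ∀ {t}, t ⊆ N → t ⊆ b '' C n → t ⊆ iterImageInter b N (n + 1) := fun htN htC =>
    subset_inter htN (htC.trans (image_mono (connectedComponentIn_subset _ _)))
  have hbCN : b '' C n ⊆ N := by
    by_contra hout
    obtain ⟨z, hzC, hzF⟩ := connectedComponentIn_inter_frontier_nonempty_of_not_subset
      ((((isCompact_iterImageInter b.continuous hNc n).connectedComponentIn x).image b.continuous))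
      hbC hNc.isClosed hxbC hxN hout
    have hzC' : z ∈ C (n + 1) :=
      connectedComponentIn_mono x (hbCK inter_subset_right inter_subset_left) hzC
    exact h.subset ⟨connectedComponentIn_mono x (antitone_iterImageInter n.le_succ) hzC', hzF⟩
  exact hbC.subset_connectedComponentIn hxbC
    ((hbCK hbCN Subset.rfl).trans (antitone_iterImageInter n.le_succ))

theorem birkhoff_dichotomy [T2Space X] [LocallyConnectedSpace X] (hx : b x = x)
    (hN : N ∈ 𝓝 x) (hNc : IsCompact N) :
    (∃ M ∈ 𝓝 x, M ⊆ N ∧ IsClosed M ∧ IsConnected M ∧ b '' M ⊆ M) ∨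
      ∃ k, IsCompact k ∧ IsConnected k ∧ k ⊆ N ∧ x ∈ k ∧ (k ∩ frontier N).Nonempty ∧
        b.symm '' k ⊆ k := by
  by_cases h : ∀ n, (connectedComponentIn (iterImageInter b N n) x ∩ frontier N).Nonempty
  · exact .inr (exists_continuum_of_forall_connectedComponentIn_meets_frontier b hx hNc
      (mem_of_mem_nhds hN) h)
  · push Not at h
    obtain ⟨n, hn⟩ := h
    have hK := iterImageInter_mem_nhds b.isOpenMap hx hN n
    exact .inl ⟨_, connectedComponentIn_mem_nhds hK,
      (connectedComponentIn_subset _ _).trans (iterImageInter_subset n),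
      ((isCompact_iterImageInter b.continuous hNc n).connectedComponentIn x).isClosed,
      isConnected_connectedComponentIn_iff.2 (mem_of_mem_nhds hK),
      image_connectedComponentIn_iterImageInter_subset b hx hNc (mem_of_mem_nhds hN) hn⟩

end Birkhoff

theorem birkhoff_lemma_general
    (b : (ℝ × ℝ) ≃ₜ (ℝ × ℝ)) (x : ℝ × ℝ) (hx : b x = x) :
    (∀ U ∈ nhds x, ∃ N ∈ nhds x, N ⊆ U ∧ IsClosed N ∧ IsConnected N ∧ ⇑b '' N ⊆ N) ∨
    (∃ U ∈ nhds x, ∀ N ∈ nhds x, N ⊆ U → IsClosed N →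
      ∃ k' : Set (ℝ × ℝ), IsCompact k' ∧ IsConnected k' ∧ k' ⊆ N ∧ x ∈ k' ∧
        (k' ∩ frontier N).Nonempty ∧ ⇑b.symm '' k' ⊆ k') := by
  refine or_iff_not_imp_left.2 fun h => ?_
  push Not at h
  obtain ⟨U, hU, hbad⟩ := h
  obtain ⟨K, hKc, hK⟩ := exists_compact_mem_nhds x
  refine ⟨U ∩ K, inter_mem hU hK, fun N hN hNUK hNcl => ?_⟩
  have hNc : IsCompact N := hKc.of_isClosed_subset hNcl (hNUK.trans inter_subset_right)
  rcases birkhoff_dichotomy b hx hN hNc with ⟨M, hM, hMN, hMcl, hMconn, hbM⟩ | hk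
  · exact absurd hbM (hbad M hM (hMN.trans (hNUK.trans inter_subset_left)) hMcl hMconn)
  · exact hk

/-- **Birkhoff's lemma.** Let `b` be a homeomorphism of the plane and `x` an
isolated fixed point of `b`. Then either (1) `x` has a basis of connected
closed neighbourhoods `N` with `b(N) ⊆ N`, or (2) every sufficiently small
closed neighbourhood `N` of `x` contains a compact connected set `k'`
containing `x` and a point of `∂N`, with `b⁻¹(k') ⊆ k'`. -/
theorem birkhoff_lemma
    (b : (ℝ × ℝ) ≃ₜ (ℝ × ℝ)) (x : ℝ × ℝ) (hx : b x = x)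
    (hx_isolated : ∃ U ∈ nhds x, ∀ y ∈ U, b y = y → y = x) :
    (∀ U ∈ nhds x, ∃ N ∈ nhds x, N ⊆ U ∧ IsClosed N ∧ IsConnected N ∧ ⇑b '' N ⊆ N) ∨
    (∃ U ∈ nhds x, ∀ N ∈ nhds x, N ⊆ U → IsClosed N →
      ∃ k' : Set (ℝ × ℝ), IsCompact k' ∧ IsConnected k' ∧ k' ⊆ N ∧ x ∈ k' ∧
        (k' ∩ frontier N).Nonempty ∧ ⇑b.symm '' k' ⊆ k') :=
  birkhoff_lemma_general b x hx
end
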